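/- For a linear map φ: V → W and a Dirac structure L_V on V, the forward image Fφ(L_V) = {φ(X) + ξ | X ∈ V, ξ ∈ W*, X + φ*ξ ∈ L_V} is a Dirac structure (maximal isotropic subspace) on W. -/

import Mathlib

open Module LinearMap

/-- The symmetric pairing `⟨X+ξ, Y+η⟩ = (ξ(Y) + η(X))/2` on `U ⊕ U*`. -/
noncomputable def pair (U : Type) [AddCommGroup U] [Module ℝ U] :
    LinearMap.BilinForm ℝ (U × Module.Dual ℝ U) :=
  LinearMap.mk₂ ℝ (fun u v => (u.2 v.1 + v.2 u.1) / 2)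
    (by intro m₁ m₂ n; simp; ring)
    (by intro c m n; simp [smul_eq_mul]; ring)
    (by intro m n₁ n₂; simp; ring)
    (by intro c m n; simp [smul_eq_mul]; ring)

/-- The forward image `Fφ(S) = {φ(X) + ξ | X ∈ V, ξ ∈ W*, X + φ*ξ ∈ S}`. -/
def fimg {V W : Type} [AddCommGroup V] [Module ℝ V] [AddCommGroup W] [Module ℝ W]
    (φ : V →ₗ[ℝ] W) (S : Set (V × Module.Dual ℝ V)) : Set (W × Module.Dual ℝ W) :=
  {p | ∃ X : V, p.1 = φ X ∧ (X, φ.dualMap p.2) ∈ S}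

lemma pair_apply (U : Type) [AddCommGroup U] [Module ℝ U]
    (u v : U × Module.Dual ℝ U) : pair U u v = (u.2 v.1 + v.2 u.1) / 2 := rfl

lemma pair_isRefl (U : Type) [AddCommGroup U] [Module ℝ U] : (pair U).IsRefl := by
  intro u v h
  rw [pair_apply] at h ⊢; linarith

lemma pair_nondeg (U : Type) [AddCommGroup U] [Module ℝ U] : (pair U).Nondegenerate := by
  refine (LinearMap.IsRefl.nondegenerate_iff_separatingLeft (pair_isRefl U)).mpr ?_
  intro u h
  have h2 : u.2 = 0 := by
    ext Y
    have := h (Y, 0)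
    rw [pair_apply] at this
    simpa using this
  have h1 : u.1 = 0 := by
    rw [← Module.forall_dual_apply_eq_zero_iff ℝ u.1]
    intro η
    have := h (0, η)
    rw [pair_apply] at this
    simpa using this
  exact Prod.ext h1 h2

/-- finrank of a product of submodules. -/
lemma finrank_prod_submodule {M N : Type} [AddCommGroup M] [Module ℝ M]
    [AddCommGroup N] [Module ℝ N] [FiniteDimensional ℝ M] [FiniteDimensional ℝ N]
    (p : Submodule ℝ M) (q : Submodule ℝ N) :
    finrank ℝ (p.prod q) = finrank ℝ p + finrank ℝ q := by
  have e : (p.prod q) ≃ₗ[ℝ] p × q :=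
    { toFun := fun x => (⟨x.1.1, x.2.1⟩, ⟨x.1.2, x.2.2⟩)
      map_add' := fun x y => rfl
      map_smul' := fun c x => rfl
      invFun := fun x => ⟨(x.1.1, x.2.1), ⟨x.1.2, x.2.2⟩⟩
      left_inv := fun x => rfl
      right_inv := fun x => rfl }
  rw [e.finrank_eq, Module.finrank_prod]

lemma orth_sup {M : Type} [AddCommGroup M] [Module ℝ M] (B : LinearMap.BilinForm ℝ M)
    (A C : Submodule ℝ M) :
    B.orthogonal (A ⊔ C) = B.orthogonal A ⊓ B.orthogonal C := by
  ext m
  simp only [Submodule.mem_inf, LinearMap.BilinForm.mem_orthogonal_iff]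
  constructor
  · intro h
    exact ⟨fun n hn => h n (Submodule.mem_sup_left hn),
      fun n hn => h n (Submodule.mem_sup_right hn)⟩
  · rintro ⟨h1, h2⟩ n hn
    have hle : A ⊔ C ≤ LinearMap.ker (B.flip m) := by
      apply sup_le
      · intro x hx; simpa [LinearMap.mem_ker] using h1 x hx
      · intro x hx; simpa [LinearMap.mem_ker] using h2 x hx
    simpa [LinearMap.BilinForm.IsOrtho, LinearMap.mem_ker] using hle hn

lemma orth_inf {M : Type} [AddCommGroup M] [Module ℝ M] [FiniteDimensional ℝ M]
    (B : LinearMap.BilinForm ℝ M) (hnd : B.Nondegenerate) (hrefl : B.IsRefl)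
    (A C : Submodule ℝ M) :
    B.orthogonal (A ⊓ C) = B.orthogonal A ⊔ B.orthogonal C := by
  conv_lhs => rw [← B.orthogonal_orthogonal hnd hrefl A,
    ← B.orthogonal_orthogonal hnd hrefl C, ← orth_sup,
    B.orthogonal_orthogonal hnd hrefl]

lemma finrank_add_orth {M : Type} [AddCommGroup M] [Module ℝ M] [FiniteDimensional ℝ M]
    (B : LinearMap.BilinForm ℝ M) (hnd : B.Nondegenerate) (hrefl : B.IsRefl)
    (N : Submodule ℝ M) :
    finrank ℝ N + finrank ℝ (B.orthogonal N) = finrank ℝ M := by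
  have := LinearMap.BilinForm.finrank_add_finrank_orthogonal (B := B) hrefl (W := N)
  rwa [B.orthogonal_top_eq_bot hnd, inf_bot_eq, finrank_bot, add_zero] at this

/-- Rank-nullity for the restriction of a map to a submodule. -/
lemma finrank_map_add_inf_ker {M N : Type} [AddCommGroup M] [Module ℝ M]
    [FiniteDimensional ℝ M] [AddCommGroup N] [Module ℝ N]
    (f : M →ₗ[ℝ] N) (p : Submodule ℝ M) :
    finrank ℝ (p.map f) + finrank ℝ (p ⊓ LinearMap.ker f : Submodule ℝ M) = finrank ℝ p := by
  have h := LinearMap.finrank_range_add_finrank_ker (f.comp p.subtype)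
  rw [LinearMap.range_comp, Submodule.range_subtype] at h
  have h2 : finrank ℝ (LinearMap.ker (f.comp p.subtype)) =
      finrank ℝ (p ⊓ LinearMap.ker f : Submodule ℝ M) := by
    rw [LinearMap.ker_comp, ← Submodule.finrank_map_subtype_eq, Submodule.map_comap_subtype,
      inf_comm]
  rw [h2] at h
  exact h

/-- For a linear map `φ : V → W` and a Dirac structure (maximal isotropic
subspace) `L_V` on `V`, the forward image `Fφ(L_V)` is a Dirac structure
on `W`. -/
theorem forward_image_is_dirac
    (V W : Type) [AddCommGroup V] [Module ℝ V] [FiniteDimensional ℝ V]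
    [AddCommGroup W] [Module ℝ W] [FiniteDimensional ℝ W]
    (φ : V →ₗ[ℝ] W) (LV : Submodule ℝ (V × Module.Dual ℝ V))
    (hiso : ∀ u ∈ LV, ∀ v ∈ LV, pair V u v = 0)
    (hdim : finrank ℝ LV = finrank ℝ V) :
    ∃ L : Submodule ℝ (W × Module.Dual ℝ W),
      (L : Set (W × Module.Dual ℝ W)) = fimg φ (LV : Set (V × Module.Dual ℝ V)) ∧
      (∀ u ∈ L, ∀ v ∈ L, pair W u v = 0) ∧
      finrank ℝ L = finrank ℝ W := by
  classical
  set g : (V × Module.Dual ℝ W) →ₗ[ℝ] (V × Module.Dual ℝ V) :=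
    LinearMap.prodMap LinearMap.id φ.dualMap with hg
  set f : (V × Module.Dual ℝ W) →ₗ[ℝ] (W × Module.Dual ℝ W) :=
    LinearMap.prodMap φ LinearMap.id with hf
  set Γ : Submodule ℝ (V × Module.Dual ℝ W) := LV.comap g with hΓdef
  refine ⟨Γ.map f, ?_, ?_, ?_⟩
  · -- carrier
    ext p
    simp only [SetLike.mem_coe, Submodule.mem_map, Submodule.mem_comap, fimg, Set.mem_setOf_eq]
    constructor
    · rintro ⟨⟨X, η⟩, hmem, rfl⟩
      exact ⟨X, rfl, hmem⟩
    · rintro ⟨X, h1, h2⟩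
      exact ⟨(X, p.2), h2, by simp [hf, h1.symm]⟩
  · -- isotropy
    rintro u hu v hv
    obtain ⟨⟨X, η⟩, hX, rfl⟩ := hu
    obtain ⟨⟨Y, μ⟩, hY, rfl⟩ := hv
    have := hiso _ hX _ hY
    rw [pair_apply] at this ⊢
    simpa [hf, hg, LinearMap.dualMap_apply] using this
  · -- dimension
    set n := finrank ℝ V
    set w := finrank ℝ W
    set B := pair V
    set E : Submodule ℝ (Module.Dual ℝ V) := LinearMap.range φ.dualMap with hE
    set C : Submodule ℝ (V × Module.Dual ℝ V) := (⊤ : Submodule ℝ V).prod E with hC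
    set C' : Submodule ℝ (V × Module.Dual ℝ V) :=
      (LinearMap.ker φ).prod (⊥ : Submodule ℝ (Module.Dual ℝ V)) with hC'
    have hnd := pair_nondeg V
    have hrefl := pair_isRefl V
    have hT : finrank ℝ (V × Module.Dual ℝ V) = n + n := by
      rw [Module.finrank_prod, Subspace.dual_finrank_eq]
    -- LV is self-orthogonal
    have hLVle : LV ≤ B.orthogonal LV := by
      intro u hu
      rw [LinearMap.BilinForm.mem_orthogonal_iff]
      intro v hv
      exact hiso v hv u hu
    have hLVorth : LV = B.orthogonal LV := by
      apply Submodule.eq_of_le_of_finrank_le hLVle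
      have := finrank_add_orth B hnd hrefl LV
      omega
    -- orthogonal of C is C'
    have horthC : B.orthogonal C = C' := by
      ext ⟨Y, μ⟩
      simp only [hC', Submodule.mem_prod, Submodule.mem_bot,
        LinearMap.BilinForm.mem_orthogonal_iff, LinearMap.mem_ker]
      constructor
      · intro h
        constructor
        · rw [← Module.forall_dual_apply_eq_zero_iff ℝ (φ Y)]
          intro η
          have := h (0, φ.dualMap η) (by simp [hC, hE])
          rw [pair_apply] at this
          simpa using this
        · ext X
          have := h (X, 0) (by simp [hC, hE])
          rw [pair_apply] at this
          simpa using this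
      · rintro ⟨hY, rfl⟩ ⟨X, ξ⟩ hXξ
        obtain ⟨-, hξ⟩ := (Submodule.mem_prod).mp hXξ
        obtain ⟨η, rfl⟩ := hξ
        rw [pair_apply]
        simp [hY]
    -- dimension bookkeeping
    have hk : finrank ℝ (LinearMap.ker φ) + finrank ℝ E = n := by
      have h1 := LinearMap.finrank_range_add_finrank_ker φ
      have h2 := LinearMap.finrank_range_dualMap_eq_finrank_range φ
      rw [hE, h2]
      omega
    have hC'rank : finrank ℝ C' = finrank ℝ (LinearMap.ker φ) := by
      rw [hC', finrank_prod_submodule, finrank_bot, add_zero]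
    have hkey : finrank ℝ (LV ⊓ C : Submodule ℝ _) =
        finrank ℝ (LV ⊓ C' : Submodule ℝ _) + finrank ℝ E := by
      have h1 : B.orthogonal (LV ⊓ C) = LV ⊔ C' := by
        rw [orth_inf B hnd hrefl, ← hLVorth, horthC]
      have h2 := finrank_add_orth B hnd hrefl (LV ⊓ C)
      rw [h1, hT] at h2
      have h3 := Submodule.finrank_sup_add_finrank_inf_eq LV C'
      omega
    -- map of Γ under g
    have hmapg : Submodule.map g Γ = LV ⊓ C := by
      rw [hΓdef, Submodule.map_comap_eq]
      have : LinearMap.range g = C := by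
        rw [hg, hC, hE]
        ext ⟨X, ξ⟩
        simp only [LinearMap.mem_range, Submodule.mem_prod, Submodule.mem_top, true_and,
          LinearMap.prodMap_apply, LinearMap.id_coe, id_eq]
        constructor
        · rintro ⟨⟨a, b⟩, h⟩
          exact ⟨b, by simpa using congrArg Prod.snd h⟩
        · rintro ⟨η, hη⟩
          exact ⟨(X, η), by simp [hη]⟩
      rw [this, inf_comm]
    have hΓrank : finrank ℝ (LV ⊓ C : Submodule ℝ _) + finrank ℝ (LinearMap.ker g) =
        finrank ℝ Γ := by
      have h1 := finrank_map_add_inf_ker g Γ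
      have h4 : Γ ⊓ LinearMap.ker g = LinearMap.ker g := by
        rw [inf_eq_right]
        intro x hx
        show g x ∈ LV
        rw [LinearMap.mem_ker.mp hx]
        exact LV.zero_mem
      rw [hmapg, h4] at h1
      exact h1
    have hkerg : finrank ℝ (LinearMap.ker g) + finrank ℝ E = w := by
      have h1 : LinearMap.ker g = (⊥ : Submodule ℝ V).prod (LinearMap.ker φ.dualMap) := by
        rw [hg, LinearMap.ker_prodMap, LinearMap.ker_id]
      have h2 := LinearMap.finrank_range_add_finrank_ker φ.dualMap
      rw [Subspace.dual_finrank_eq] at h2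
      rw [h1, finrank_prod_submodule, finrank_bot, zero_add, hE]
      omega
    -- the kernel part for f
    have hker_eq : finrank ℝ (Γ ⊓ LinearMap.ker f : Submodule ℝ _) =
        finrank ℝ (LV ⊓ C' : Submodule ℝ _) := by
      set P : Submodule ℝ (V × Module.Dual ℝ W) := Γ ⊓ LinearMap.ker f with hP
      have hmap : Submodule.map g P = LV ⊓ C' := by
        ext z
        simp only [Submodule.mem_map, Submodule.mem_inf]
        constructor
        · rintro ⟨⟨X, η⟩, ⟨hmem, hker⟩, rfl⟩
          have hker' : f (X, η) = 0 := LinearMap.mem_ker.mp hker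
          have hX : φ X = 0 := congrArg Prod.fst hker'
          have hη : η = 0 := congrArg Prod.snd hker'
          subst hη
          have hmem' : g (X, (0 : Module.Dual ℝ W)) ∈ LV := hmem
          refine ⟨hmem', ?_⟩
          rw [hC', Submodule.mem_prod]
          constructor
          · simpa [hg] using hX
          · simp [hg]
        · rintro ⟨hLV, hC'mem⟩
          rw [hC', Submodule.mem_prod, Submodule.mem_bot] at hC'mem
          obtain ⟨hZ, hz2⟩ := hC'mem
          have hgz : g (z.1, (0 : Module.Dual ℝ W)) = (z.1, 0) := by simp [hg]
          have hze : z = (z.1, (0 : Module.Dual ℝ V)) := by rw [← hz2]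
          refine ⟨(z.1, 0), ⟨?_, ?_⟩, ?_⟩
          · show g (z.1, (0 : Module.Dual ℝ W)) ∈ LV
            rw [hgz, ← hze]
            exact hLV
          · show (z.1, (0 : Module.Dual ℝ W)) ∈ LinearMap.ker f
            rw [LinearMap.mem_ker]
            have : f (z.1, (0 : Module.Dual ℝ W)) = (φ z.1, 0) := by simp [hf]
            rw [this, hZ]
            rfl
          · rw [hgz, ← hze]
      have h1 := finrank_map_add_inf_ker g P
      have h2 : P ⊓ LinearMap.ker g = ⊥ := by
        rw [Submodule.eq_bot_iff]
        rintro ⟨X, η⟩ hx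
        rw [Submodule.mem_inf] at hx
        obtain ⟨hPm, hgk⟩ := hx
        have hgk' : g (X, η) = 0 := LinearMap.mem_ker.mp hgk
        have hX : X = 0 := congrArg Prod.fst hgk'
        rw [hP, Submodule.mem_inf] at hPm
        have hker' : f (X, η) = 0 := LinearMap.mem_ker.mp hPm.2
        have hη : η = 0 := congrArg Prod.snd hker'
        simp [hX, hη, Prod.ext_iff]
      rw [hmap, h2, finrank_bot, add_zero] at h1
      omega
    have hLrank := finrank_map_add_inf_ker f Γ
    rw [hker_eq] at hLrank
    omega
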